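/- arXiv:2511.12534 — 5 statements merged into one kernel-verified Lean document; each statement's English description precedes it below -/
import Mathlib

section
/- Under the elliptical potential setting, Σ_{m=1}^M n_m · c_mᵀ V_m⁻¹ c_m ≤ 2·d·log(1 + τ/(λ·d)). -/
open Matrix Finset

/-!
By the matrix determinant lemma, `det V_{m+1} = det V_m * (1 + x_m)` with
`x_m = n_m c_mᵀ V_m⁻¹ c_m ∈ [0, 1]`, and `x ≤ 2 log (1 + x)` on `[0, 1]`, so the sum telescopes
to at most `2 log (det V_{M+1} / det V_1)`. AM-GM on the eigenvalues gives
`det V_{M+1} ≤ (tr V_{M+1} / d) ^ d ≤ ((λ d + τ) / d) ^ d`, while `det V_1 = λ ^ d`.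
-/

lemma Real.le_two_mul_log_one_add {x : ℝ} (h0 : 0 ≤ x) (h1 : x ≤ 1) : x ≤ 2 * Real.log (1 + x) := by
  have hlog := Real.one_sub_inv_le_log_of_pos (by linarith : 0 < 1 + x)
  have hx : x / 2 ≤ x / (1 + x) := div_le_div_of_nonneg_left h0 (by linarith) (by linarith)
  have hx' : x / (1 + x) = 1 - (1 + x)⁻¹ := by field_simp; ring
  linarith

lemma Real.prod_le_arith_mean_pow_card {ι : Type*} (s : Finset ι) {z : ι → ℝ}
    (hz : ∀ i ∈ s, 0 ≤ z i) : ∏ i ∈ s, z i ≤ ((∑ i ∈ s, z i) / #s) ^ #s := by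
  rcases s.eq_empty_or_nonempty with rfl | hs
  · simp
  have hcard : (#s : ℝ) ≠ 0 := by simpa using hs.ne_empty
  have amgm := Real.geom_mean_le_arith_mean_weighted s (fun _ => (#s : ℝ)⁻¹) z
    (fun _ _ => by positivity) (by simp [hcard]) hz
  calc ∏ i ∈ s, z i = (∏ i ∈ s, z i ^ (#s : ℝ)⁻¹) ^ #s := by
        rw [← prod_pow]
        exact prod_congr rfl fun i hi =>
          (Real.rpow_inv_natCast_pow (hz i hi) (by simpa using hs.ne_empty)).symm
    _ ≤ ((∑ i ∈ s, z i) / #s) ^ #s := by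
        rw [div_eq_inv_mul, mul_sum]
        exact pow_le_pow_left₀ (prod_nonneg fun i hi => Real.rpow_nonneg (hz i hi) _) amgm _

namespace Matrix

variable {ι : Type*} [Fintype ι] [DecidableEq ι]

lemma det_add_vecMulVec {α : Type*} [CommRing α] {A : Matrix ι ι α} (hA : IsUnit A.det)
    (u v : ι → α) : (A + vecMulVec u v).det = A.det * (1 + v ⬝ᵥ A⁻¹ *ᵥ u) := by
  rw [vecMulVec_eq Unit, det_add_replicateCol_mul_replicateRow hA, det_unique (n := Unit),
    add_apply, one_apply_eq, ← replicateRow_vecMul, replicateRow_mul_replicateCol_apply,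
    dotProduct_mulVec]

omit [DecidableEq ι] in
lemma posSemidef_smul_vecMulVec_self {r : ℝ} (hr : 0 ≤ r) (c : ι → ℝ) :
    (r • vecMulVec c c).PosSemidef := by
  simpa using (posSemidef_vecMulVec_self_star c).smul hr

lemma PosSemidef.det_le_trace_div_card_pow {A : Matrix ι ι ℝ} (hA : A.PosSemidef) :
    A.det ≤ (A.trace / Fintype.card ι) ^ Fintype.card ι := by
  rw [hA.1.det_eq_prod_eigenvalues, hA.1.trace_eq_sum_eigenvalues]
  simpa using Real.prod_le_arith_mean_pow_card univ fun i _ => hA.eigenvalues_nonneg i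

lemma PosDef.quadForm_le_two_mul_log_det_add {A : Matrix ι ι ℝ} (hA : A.PosDef) {r : ℝ}
    (hr : 0 ≤ r) {c : ι → ℝ} (hsmall : r * (c ⬝ᵥ A⁻¹ *ᵥ c) ≤ 1) :
    r * (c ⬝ᵥ A⁻¹ *ᵥ c) ≤ 2 * (Real.log (A + r • vecMulVec c c).det - Real.log A.det) := by
  have hq : 0 ≤ r * (c ⬝ᵥ A⁻¹ *ᵥ c) :=
    mul_nonneg hr (by simpa using hA.inv.posSemidef.dotProduct_mulVec_nonneg c)
  have hdet : (A + r • vecMulVec c c).det = A.det * (1 + r * (c ⬝ᵥ A⁻¹ *ᵥ c)) := by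
    rw [← smul_vecMulVec, det_add_vecMulVec hA.det_pos.ne'.isUnit, mulVec_smul, dotProduct_smul,
      smul_eq_mul]
  rw [hdet, Real.log_mul hA.det_pos.ne' (by positivity), add_sub_cancel_left]
  exact Real.le_two_mul_log_one_add hq hsmall

lemma PosDef.log_det_le {A : Matrix ι ι ℝ} (hA : A.PosDef) {t : ℝ} (ht : A.trace ≤ t) :
    Real.log A.det ≤ Fintype.card ι * Real.log (t / Fintype.card ι) := by
  rw [← Real.log_pow]
  refine Real.log_le_log hA.det_pos (hA.posSemidef.det_le_trace_div_card_pow.trans ?_)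
  have := hA.posSemidef.trace_nonneg
  gcongr

end Matrix

lemma Finset.sum_Icc_one_sub {G : Type*} [AddCommGroup G] (f : ℕ → G) (M : ℕ) :
    ∑ m ∈ Icc 1 M, (f (m + 1) - f m) = f (M + 1) - f 1 := by
  rw [← Ico_add_one_right_eq_Icc, sum_Ico_sub f (by omega)]

section RankOneUpdates

variable {ι : Type*} [Fintype ι] {M : ℕ} {c : ℕ → ι → ℝ} {w : ℕ → ℝ}
  {V : ℕ → Matrix ι ι ℝ}

lemma posDef_of_rankOneUpdates (h1 : (V 1).PosDef) (hw : ∀ m, 0 ≤ w m)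
    (hV : ∀ m, 1 ≤ m → m ≤ M → V (m + 1) = V m + w m • vecMulVec (c m) (c m)) :
    ∀ m, 1 ≤ m → m ≤ M + 1 → (V m).PosDef := by
  intro m hm
  induction m, hm using Nat.le_induction with
  | base => exact fun _ => h1
  | succ m hm ih =>
    intro hmM
    rw [hV m hm (by omega)]
    exact (ih (by omega)).add_posSemidef (posSemidef_smul_vecMulVec_self (hw m) _)

lemma sum_quadForm_le_two_mul_log_det [DecidableEq ι]
    (hpos : ∀ m, 1 ≤ m → m ≤ M + 1 → (V m).PosDef) (hw : ∀ m, 0 ≤ w m)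
    (hV : ∀ m, 1 ≤ m → m ≤ M → V (m + 1) = V m + w m • vecMulVec (c m) (c m))
    (hsmall : ∀ m, 1 ≤ m → m ≤ M → w m * (c m ⬝ᵥ (V m)⁻¹ *ᵥ c m) ≤ 1) :
    ∑ m ∈ Icc 1 M, w m * (c m ⬝ᵥ (V m)⁻¹ *ᵥ c m) ≤
      2 * (Real.log (V (M + 1)).det - Real.log (V 1).det) := by
  rw [← sum_Icc_one_sub fun m => Real.log (V m).det, mul_sum]
  refine sum_le_sum fun m hm => ?_
  rw [mem_Icc] at hm
  rw [hV m hm.1 hm.2]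
  exact (hpos m hm.1 (by omega)).quadForm_le_two_mul_log_det_add (hw m) (hsmall m hm.1 hm.2)

lemma trace_le_add_sum_of_rankOneUpdates (hw : ∀ m, 0 ≤ w m)
    (hc : ∀ m, 1 ≤ m → m ≤ M → c m ⬝ᵥ c m ≤ 1)
    (hV : ∀ m, 1 ≤ m → m ≤ M → V (m + 1) = V m + w m • vecMulVec (c m) (c m)) :
    (V (M + 1)).trace ≤ (V 1).trace + ∑ m ∈ Icc 1 M, w m := by
  rw [← sub_le_iff_le_add', ← sum_Icc_one_sub fun m => (V m).trace]
  refine sum_le_sum fun m hm => ?_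
  rw [mem_Icc] at hm
  rw [hV m hm.1 hm.2, trace_add, trace_smul, trace_vecMulVec, smul_eq_mul, add_sub_cancel_left]
  exact mul_le_of_le_one_right (hw m) (hc m hm.1 hm.2)

end RankOneUpdates

/-- Elliptical potential lemma:
`∑_{m=1}^M n_m c_mᵀ V_m⁻¹ c_m ≤ 2 d log (1 + τ/(λ d))`. -/
theorem elliptical_potential_sum {d M : ℕ} (hd : 1 ≤ d) (lam : ℝ) (hlam : 1 ≤ lam)
    (c : ℕ → Fin d → ℝ) (n : ℕ → ℕ)
    (V : ℕ → Matrix (Fin d) (Fin d) ℝ)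
    (hc : ∀ m, 1 ≤ m → m ≤ M → Real.sqrt (∑ k, c m k ^ 2) ≤ 1)
    (hV1 : V 1 = lam • (1 : Matrix (Fin d) (Fin d) ℝ))
    (hVrec : ∀ m, 1 ≤ m → m ≤ M →
      V (m + 1) = V m + (n m : ℝ) • vecMulVec (c m) (c m))
    (hsmall : ∀ m, 1 ≤ m → m ≤ M →
      (n m : ℝ) * (c m ⬝ᵥ (V m)⁻¹.mulVec (c m)) ≤ 1) :
    ∑ m ∈ Finset.Icc 1 M, (n m : ℝ) * (c m ⬝ᵥ (V m)⁻¹.mulVec (c m)) ≤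
      2 * d * Real.log (1 + ((∑ m ∈ Finset.Icc 1 M, n m : ℕ) : ℝ) / (lam * d)) := by
  have hlam0 : 0 < lam := by linarith
  have hd0 : (0 : ℝ) < d := by exact_mod_cast hd
  set τ : ℝ := ((∑ m ∈ Finset.Icc 1 M, n m : ℕ) : ℝ)
  have hw : ∀ m, (0 : ℝ) ≤ n m := fun m => Nat.cast_nonneg _
  have hpos := posDef_of_rankOneUpdates (hV1 ▸ PosDef.one.smul hlam0) hw hVrec
  have htrace : (V (M + 1)).trace ≤ lam * d + τ := by
    have hc' : ∀ m, 1 ≤ m → m ≤ M → c m ⬝ᵥ c m ≤ 1 := fun m h1 h2 => by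
      simpa [dotProduct, sq] using hc m h1 h2
    simpa [hV1, τ, mul_comm] using trace_le_add_sum_of_rankOneUpdates hw hc' hVrec
  have hlogV1 : Real.log (V 1).det = d * Real.log lam := by simp [hV1, Real.log_pow]
  have hlogVM := (hpos (M + 1) (by omega) le_rfl).log_det_le htrace
  rw [Fintype.card_fin] at hlogVM
  calc _ ≤ 2 * (Real.log (V (M + 1)).det - Real.log (V 1).det) :=
        sum_quadForm_le_two_mul_log_det hpos hw hVrec hsmall
    _ ≤ 2 * d * (Real.log ((lam * d + τ) / d) - Real.log lam) := by rw [hlogV1]; linarith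
    _ = 2 * d * Real.log (1 + τ / (lam * d)) := by
        rw [← Real.log_div (by positivity) hlam0.ne']
        congr 2
        field_simp
end

section
/- Let A be a d×d real symmetric positive definite matrix and Δ a d×d real symmetric positive semidefinite matrix with tr(A⁻¹Δ) ≤ 1. Then tr(A⁻¹Δ) ≤ 2·(log det(A + Δ) − log det A). -/
/-!
Writing `A = Bᴴ B`, the congruent matrix `S = B⁻ᴴ Δ B⁻¹` is positive semidefinite with
`tr S = tr (A⁻¹ Δ)` and `det (A + Δ) = det A · det (1 + S)`. In terms of the eigenvalues
`μᵢ ≥ 0` of `S`, whose sum is at most `1`, the claim becomes `∑ μᵢ ≤ 2 ∑ log (1 + μᵢ)`,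
which holds termwise.
-/

open Matrix

/-- On `[0, 2]` the chord bound `2t / (t + 2) ≤ log (1 + t)` is at least `t / 2`. -/
lemma Real.le_two_mul_log_one_add_s3 {t : ℝ} (h₀ : 0 ≤ t) (h₂ : t ≤ 2) :
    t ≤ 2 * Real.log (1 + t) := by
  have hchord := Real.le_log_one_add_of_nonneg h₀
  have : t / 2 ≤ 2 * t / (t + 2) := by
    rw [div_le_div_iff₀ two_pos (by linarith)]
    nlinarith
  linarith

namespace Matrix

variable {n : Type*} [Fintype n] [DecidableEq n]

lemma IsHermitian.det_one_add {𝕜 : Type*} [RCLike 𝕜] {S : Matrix n n 𝕜} (hS : S.IsHermitian) :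
    (1 + S).det = ∏ i, (1 + (hS.eigenvalues i : 𝕜)) := by
  have hcfc : 1 + S = cfc (fun x : ℝ ↦ 1 + x) S := by
    rw [cfc_add .., cfc_const_one .., cfc_id' ..]
  rw [hcfc, hS.cfc_eq]
  simp [IsHermitian.cfc, -Unitary.conjStarAlgAut_apply]

lemma PosSemidef.trace_le_two_mul_log_det_one_add {S : Matrix n n ℝ} (hS : S.PosSemidef)
    (h : S.trace ≤ 2) : S.trace ≤ 2 * Real.log (1 + S).det := by
  have hμ₀ := hS.eigenvalues_nonneg
  rw [hS.isHermitian.trace_eq_sum_eigenvalues] at h ⊢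
  have hμ₂ (i : n) : hS.isHermitian.eigenvalues i ≤ 2 :=
    (Finset.single_le_sum (fun j _ ↦ hμ₀ j) (Finset.mem_univ i)).trans (by simpa using h)
  rw [hS.isHermitian.det_one_add, Real.log_prod fun i _ ↦ by simp only [Real.ringHom_apply]; linarith [hμ₀ i],
    Finset.mul_sum]
  exact Finset.sum_le_sum fun i _ ↦ by simpa using Real.le_two_mul_log_one_add_s3 (hμ₀ i) (hμ₂ i)

open scoped ComplexOrder MatrixOrder in
lemma PosSemidef.exists_eq_conjTranspose_mul_self {𝕜 : Type*} [RCLike 𝕜] {A : Matrix n n 𝕜}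
    (hA : A.PosSemidef) : ∃ B : Matrix n n 𝕜, A = Bᴴ * B :=
  CStarAlgebra.nonneg_iff_eq_star_mul_self.mp hA.nonneg

variable {R : Type*} [CommRing R] [StarRing R]

lemma trace_inv_conjTranspose_mul_self_mul (B Δ : Matrix n n R) :
    ((Bᴴ * B)⁻¹ * Δ).trace = (B⁻¹ᴴ * Δ * B⁻¹).trace := by
  rw [mul_inv_rev, ← conjTranspose_nonsing_inv, mul_assoc, trace_mul_comm, mul_assoc]

lemma det_conjTranspose_mul_self_add {B : Matrix n n R} (hB : IsUnit B.det) (Δ : Matrix n n R) :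
    (Bᴴ * B + Δ).det = (Bᴴ * B).det * (1 + B⁻¹ᴴ * Δ * B⁻¹).det := by
  have hcongr : Bᴴ * B + Δ = Bᴴ * (1 + B⁻¹ᴴ * Δ * B⁻¹) * B := by
    rw [mul_add, add_mul, mul_one, ← mul_assoc, ← mul_assoc, ← conjTranspose_mul,
      nonsing_inv_mul _ hB, conjTranspose_one, one_mul, mul_assoc, nonsing_inv_mul _ hB, mul_one]
  rw [hcongr, det_mul, det_mul, det_mul]
  ring

end Matrix

/-- If `A` is symmetric positive definite, `Δ` is symmetric positive semidefinite, and
`tr(A⁻¹ Δ) ≤ 1`, then `tr(A⁻¹ Δ) ≤ 2 (log det (A + Δ) − log det A)`. -/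
theorem trace_le_two_mul_logdet_diff {d : ℕ}
    (A Δ : Matrix (Fin d) (Fin d) ℝ)
    (hA : A.PosDef) (hΔ : Δ.PosSemidef)
    (h : (A⁻¹ * Δ).trace ≤ 1) :
    (A⁻¹ * Δ).trace ≤ 2 * (Real.log (A + Δ).det - Real.log A.det) := by
  obtain ⟨B, rfl⟩ := hA.posSemidef.exists_eq_conjTranspose_mul_self
  have hB : IsUnit B.det :=
    isUnit_iff_ne_zero.mpr (right_ne_zero_of_mul (det_mul Bᴴ B ▸ hA.det_pos.ne'))
  have hS : (B⁻¹ᴴ * Δ * B⁻¹).PosSemidef := hΔ.conjTranspose_mul_mul_same B⁻¹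
  rw [trace_inv_conjTranspose_mul_self_mul] at h ⊢
  rw [det_conjTranspose_mul_self_add hB, Real.log_mul hA.det_pos.ne'
    (PosDef.one.add_posSemidef hS).det_pos.ne', add_sub_cancel_left]
  exact hS.trace_le_two_mul_log_det_one_add (h.trans one_le_two)
end

section
/- Let λ > 0 and let c_1, …, c_τ ∈ ℝ^d with ‖c_t‖₂ ≤ 1 for all t. Define V = λ·I_d + Σ_{t=1}^τ c_t c_tᵀ. Then log det(λ⁻¹ V) ≤ d · log(1 + τ/(λ·d)). -/
/-! The matrix `λ⁻¹ V = I + λ⁻¹ ∑ c_t c_tᵀ` is positive definite, so AM-GM on its eigenvalues gives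
`det (λ⁻¹ V) ≤ (tr (λ⁻¹ V) / d) ^ d`, while `tr (λ⁻¹ V) = d + λ⁻¹ ∑ ‖c_t‖² ≤ d + τ / λ`. -/

open Finset Matrix

theorem Real.prod_le_sum_div_card_pow {ι : Type*} (s : Finset ι) (z : ι → ℝ)
    (hz : ∀ i ∈ s, 0 ≤ z i) : ∏ i ∈ s, z i ≤ ((∑ i ∈ s, z i) / #s) ^ #s := by
  rcases s.eq_empty_or_nonempty with rfl | hs
  · simp
  have hcard : (0 : ℝ) < #s := by exact_mod_cast hs.card_pos
  have amgm := Real.geom_mean_le_arith_mean_weighted s (fun _ ↦ (#s : ℝ)⁻¹) z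
    (fun _ _ ↦ by positivity) (by simp [hcard.ne']) hz
  rw [Real.finsetProd_rpow s z hz, ← mul_sum, inv_mul_eq_div] at amgm
  calc ∏ i ∈ s, z i = ((∏ i ∈ s, z i) ^ (#s : ℝ)⁻¹) ^ #s :=
        (Real.rpow_inv_natCast_pow (prod_nonneg hz) hs.card_pos.ne').symm
    _ ≤ ((∑ i ∈ s, z i) / #s) ^ #s :=
        pow_le_pow_left₀ (Real.rpow_nonneg (prod_nonneg hz) _) amgm _

theorem Matrix.PosSemidef.det_le_trace_div_card_pow_s4 {n : Type*} [Fintype n] [DecidableEq n]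
    {A : Matrix n n ℝ} (hA : A.PosSemidef) :
    A.det ≤ (A.trace / Fintype.card n) ^ Fintype.card n := by
  rw [hA.isHermitian.det_eq_prod_eigenvalues, hA.isHermitian.trace_eq_sum_eigenvalues]
  simpa using Real.prod_le_sum_div_card_pow univ _ fun i _ ↦ hA.eigenvalues_nonneg i

theorem Matrix.trace_sum_vecMulVec_self_le {ι n : Type*} [Fintype ι] [Fintype n]
    (c : ι → n → ℝ) (hc : ∀ t, c t ⬝ᵥ c t ≤ 1) :
    (∑ t, vecMulVec (c t) (c t)).trace ≤ Fintype.card ι := by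
  rw [trace_sum]
  simpa [trace_vecMulVec] using sum_le_sum fun t (_ : t ∈ univ) ↦ hc t

/-- Log-determinant bound: if `‖c_t‖₂ ≤ 1` for all `t` and
`V = λ I + ∑_t c_t c_tᵀ`, then `log det (λ⁻¹ V) ≤ d log (1 + τ/(λ d))`. -/
theorem logdet_bound {d τ : ℕ} (lam : ℝ) (hlam : 0 < lam)
    (c : Fin τ → Fin d → ℝ)
    (hc : ∀ t, Real.sqrt (∑ k, c t k ^ 2) ≤ 1) :
    Real.log ((lam⁻¹ • (lam • (1 : Matrix (Fin d) (Fin d) ℝ) +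
        ∑ t, vecMulVec (c t) (c t))).det) ≤
      d * Real.log (1 + τ / (lam * d)) := by
  set S := ∑ t, vecMulVec (c t) (c t)
  set M := lam⁻¹ • (lam • (1 : Matrix (Fin d) (Fin d) ℝ) + S)
  have hS : S.PosSemidef := posSemidef_sum _ fun t _ ↦ posSemidef_vecMulVec_self_star (c t)
  have hM : M.PosDef := ((PosDef.one.smul hlam).add_posSemidef hS).smul (inv_pos.mpr hlam)
  have htrS : S.trace ≤ τ := by
    refine (trace_sum_vecMulVec_self_le c fun t ↦ ?_).trans_eq (by simp)
    simpa [dotProduct, sq] using Real.sqrt_le_one.mp (hc t)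
  have htrM : M.trace / d ≤ 1 + τ / (lam * d) :=
    calc M.trace / d = d / d + S.trace / (lam * d) := by
          simp only [M, trace_smul, trace_add, trace_one, Fintype.card_fin, smul_eq_mul]
          field_simp
      -- `d / d ≤ 1` also holds for `d = 0`, where `d / d = 0`
      _ ≤ 1 + τ / (lam * d) := by gcongr; exact div_self_le_one _
  have hdet : M.det ≤ (1 + τ / (lam * d)) ^ d :=
    calc M.det ≤ (M.trace / d) ^ d := by
          simpa using hM.posSemidef.det_le_trace_div_card_pow_s4
      _ ≤ (1 + τ / (lam * d)) ^ d :=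
          pow_le_pow_left₀ (by have := hM.posSemidef.trace_nonneg; positivity) htrM _
  calc Real.log M.det ≤ Real.log ((1 + τ / (lam * d)) ^ d) := Real.log_le_log hM.det_pos hdet
    _ = d * Real.log (1 + τ / (lam * d)) := Real.log_pow _ _
end

section
/- Let V be a d×d real symmetric positive definite matrix, let P★, P̂ ∈ ℝ^{n×d}, and let β ≥ 0. If tr((P★ − P̂) V (P★ − P̂)ᵀ) ≤ n·β², then for every c ∈ ℝ^d, the ℓ1 norm of the vector (P★ − P̂)·c satisfies ‖(P★ − P̂)·c‖₁ ≤ n·β·√(cᵀ V⁻¹ c). -/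
/-!
Write `Δ = P★ − P̂` with rows `δᵢ`. Cauchy–Schwarz for the inner product `⟨x, y⟩_V = xᵀ V y`,
applied to `δᵢ` and `V⁻¹ c`, gives `|δᵢ ⬝ c| ≤ √(δᵢᵀ V δᵢ) · √(cᵀ V⁻¹ c)`. Summing over the `n`
rows and applying Cauchy–Schwarz once more in `ℝⁿ` bounds the ℓ1 norm by
`√n · √(∑ᵢ δᵢᵀ V δᵢ) · √(cᵀ V⁻¹ c)`, and `∑ᵢ δᵢᵀ V δᵢ = tr(Δ V Δᵀ) ≤ n β²`.
-/

open Matrix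

namespace Matrix

variable {m ι : Type*} [Fintype m] [Fintype ι]

theorem trace_mul_mul_transpose {α : Type*} [CommSemiring α] (A : Matrix m ι α)
    (B : Matrix ι ι α) : (A * B * Aᵀ).trace = ∑ i, A i ⬝ᵥ B *ᵥ A i := by
  simp only [trace, diag, mul_apply, dotProduct, mulVec, transpose_apply, Finset.sum_mul,
    Finset.mul_sum]
  exact Finset.sum_congr rfl fun i _ => by rw [Finset.sum_comm]; simp only [mul_comm, mul_left_comm]

theorem PosSemidef.dotProduct_mulVec_sq_le {M : Matrix ι ι ℝ} (hM : M.PosSemidef) (x y : ι → ℝ) :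
    (x ⬝ᵥ M *ᵥ y) ^ 2 ≤ (x ⬝ᵥ M *ᵥ x) * (y ⬝ᵥ M *ᵥ y) := by
  let := M.toSeminormedAddCommGroup hM
  let := M.toInnerProductSpace hM
  have hinner (u v : ι → ℝ) : inner ℝ u v = u ⬝ᵥ M *ᵥ v := by
    change (M *ᵥ v) ⬝ᵥ star u = _
    simp [dotProduct_comm]
  simpa only [hinner, sq] using real_inner_mul_inner_self_le x y

variable [DecidableEq ι]

theorem PosDef.abs_dotProduct_le {V : Matrix ι ι ℝ} (hV : V.PosDef) (x c : ι → ℝ) :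
    |x ⬝ᵥ c| ≤ √(x ⬝ᵥ V *ᵥ x) * √(c ⬝ᵥ V⁻¹ *ᵥ c) := by
  have hVc : V *ᵥ V⁻¹ *ᵥ c = c := by
    rw [mulVec_mulVec, mul_nonsing_inv V hV.det_pos.ne'.isUnit, one_mulVec]
  have hcs := hV.posSemidef.dotProduct_mulVec_sq_le x (V⁻¹ *ᵥ c)
  rw [hVc, dotProduct_comm (V⁻¹ *ᵥ c)] at hcs
  have hx : 0 ≤ x ⬝ᵥ V *ᵥ x := by simpa using hV.posSemidef.dotProduct_mulVec_nonneg x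
  rw [← Real.sqrt_sq_eq_abs, ← Real.sqrt_mul hx]
  exact Real.sqrt_le_sqrt hcs

theorem PosDef.sum_abs_mulVec_le {V : Matrix ι ι ℝ} (hV : V.PosDef) (A : Matrix m ι ℝ)
    (c : ι → ℝ) :
    ∑ i, |(A *ᵥ c) i| ≤ √(Fintype.card m) * √(A * V * Aᵀ).trace * √(c ⬝ᵥ V⁻¹ *ᵥ c) := by
  have hrows : ∑ i, √(A i ⬝ᵥ V *ᵥ A i) ≤ √(Fintype.card m) * √(A * V * Aᵀ).trace := by
    simpa [trace_mul_mul_transpose] using Real.sum_sqrt_mul_sqrt_le Finset.univ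
      (fun _ => zero_le_one) fun i => hV.posSemidef.dotProduct_mulVec_nonneg (A i)
  calc ∑ i, |(A *ᵥ c) i| ≤ ∑ i, √(A i ⬝ᵥ V *ᵥ A i) * √(c ⬝ᵥ V⁻¹ *ᵥ c) :=
        Finset.sum_le_sum fun i _ => hV.abs_dotProduct_le (A i) c
    _ = (∑ i, √(A i ⬝ᵥ V *ᵥ A i)) * √(c ⬝ᵥ V⁻¹ *ᵥ c) := (Finset.sum_mul ..).symm
    _ ≤ _ := by gcongr

end Matrix

/-- If `tr((P★ − P̂) V (P★ − P̂)ᵀ) ≤ n β²` with `V` symmetric positive definite, then for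
every `c`, `‖(P★ − P̂) c‖₁ ≤ n β √(cᵀ V⁻¹ c)`. -/
theorem l1_error_bound {n d : ℕ}
    (V : Matrix (Fin d) (Fin d) ℝ) (hV : V.PosDef)
    (Pstar Phat : Matrix (Fin n) (Fin d) ℝ) (β : ℝ) (hβ : 0 ≤ β)
    (h : ((Pstar - Phat) * V * (Pstar - Phat)ᵀ).trace ≤ n * β ^ 2) :
    ∀ c : Fin d → ℝ,
      ∑ i, |(Pstar - Phat).mulVec c i| ≤ n * β * Real.sqrt (c ⬝ᵥ V⁻¹.mulVec c) := by
  intro c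
  have hnβ : √(n : ℝ) * √(n * β ^ 2) = n * β := by
    rw [← Real.sqrt_mul (Nat.cast_nonneg n), ← mul_assoc, ← sq, ← mul_pow,
      Real.sqrt_sq (by positivity)]
  calc ∑ i, |(Pstar - Phat).mulVec c i|
      ≤ √(n : ℝ) * √((Pstar - Phat) * V * (Pstar - Phat)ᵀ).trace * √(c ⬝ᵥ V⁻¹ *ᵥ c) := by
        simpa using hV.sum_abs_mulVec_le (Pstar - Phat) c
    _ ≤ √(n : ℝ) * √(n * β ^ 2) * √(c ⬝ᵥ V⁻¹ *ᵥ c) := by gcongr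
    _ = n * β * √(c ⬝ᵥ V⁻¹ *ᵥ c) := by rw [hnβ]
end

section
/- For every s ∈ S, the function V' := 4·Ṽ satisfies the Bellman inequality V'(s) ≥ ℓ(s) + Σ_{s'∈S} P(s' | s)·V'(s'). -/
/-!
Write `ΔV = Σ (P - P̃) Ṽ`. Since `0 ≤ Ṽ ≤ B★`, `ΔV ≤ B★ · Σ |P̃ - P| ≤ ℓ / 2`, and `ℓ̃ ≥ 3ℓ / 4`.
Hence `ℓ + 4 Σ P Ṽ ≤ ℓ + 2ℓ + 4 Σ P̃ Ṽ ≤ 4 ℓ̃ + 4 Σ P̃ Ṽ = 4 Ṽ`.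
-/

open Finset

theorem sum_mul_sub_sum_mul_le_sum_abs_sub_mul {ι α : Type*} [Ring α] [LinearOrder α]
    [IsStrictOrderedRing α] (s : Finset ι) (p q v : ι → α) {B : α}
    (hv₀ : ∀ i ∈ s, 0 ≤ v i) (hvB : ∀ i ∈ s, v i ≤ B) :
    ∑ i ∈ s, p i * v i - ∑ i ∈ s, q i * v i ≤ (∑ i ∈ s, |p i - q i|) * B := by
  rw [← sum_sub_distrib, sum_mul]
  refine sum_le_sum fun i hi => ?_
  calc p i * v i - q i * v i = (p i - q i) * v i := (sub_mul _ _ _).symm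
    _ ≤ |p i - q i| * v i := mul_le_mul_of_nonneg_right (le_abs_self _) (hv₀ i hi)
    _ ≤ |p i - q i| * B := mul_le_mul_of_nonneg_left (hvB i hi) (abs_nonneg _)

theorem four_times_optimistic_value_bellman_general
    {S : Type*} [Fintype S]
    (ℓ ℓt : S → ℝ) (P Pt : S → S → ℝ) (Bstar : ℝ) (Vt : S → ℝ)
    (hB : 0 < Bstar)
    (hVnonneg : ∀ s, 0 ≤ Vt s) (hVB : ∀ s, Vt s ≤ Bstar)
    (hbellman : ∀ s, Vt s = ℓt s + ∑ s', Pt s s' * Vt s')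
    (hPclose : ∀ s, ∑ s', |Pt s s' - P s s'| ≤ ℓ s / (2 * Bstar))
    (hℓclose : ∀ s, |ℓt s - ℓ s| ≤ ℓ s / 4) :
    ∀ s, ℓ s + ∑ s', P s s' * (4 * Vt s') ≤ 4 * Vt s := by
  intro s
  have hdrift : ∑ s', P s s' * Vt s' - ∑ s', Pt s s' * Vt s' ≤ ℓ s / 2 :=
    calc ∑ s', P s s' * Vt s' - ∑ s', Pt s s' * Vt s'
        ≤ (∑ s', |Pt s s' - P s s'|) * Bstar := by
          simpa only [abs_sub_comm (P s _)] using sum_mul_sub_sum_mul_le_sum_abs_sub_mul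
            univ (P s) (Pt s) Vt (fun i _ => hVnonneg i) (fun i _ => hVB i)
      _ ≤ ℓ s / (2 * Bstar) * Bstar := mul_le_mul_of_nonneg_right (hPclose s) hB.le
      _ = ℓ s / 2 := by field_simp
  have hcost : 3 * ℓ s / 4 ≤ ℓt s := by linarith [(abs_le.mp (hℓclose s)).1]
  simp only [mul_left_comm _ (4 : ℝ), ← mul_sum]
  linarith [hbellman s]

/-- If `Ṽ` satisfies the Bellman equation for the approximate model `(ℓ̃, P̃)`, is bounded in
`[0, B★]`, and the approximate model is close to the true model `(ℓ, P)`, then `V' = 4 Ṽ`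
satisfies the Bellman inequality `V'(s) ≥ ℓ(s) + ∑_{s'} P(s'|s) V'(s')` for the true model. -/
theorem four_times_optimistic_value_bellman
    {S : Type*} [Fintype S] [Nonempty S]
    (ℓ ℓt : S → ℝ) (P Pt : S → S → ℝ) (Bstar : ℝ) (Vt : S → ℝ)
    (hℓpos : ∀ s, 0 < ℓ s)
    (hP : ∀ s s', 0 ≤ P s s') (hPsum : ∀ s, ∑ s', P s s' ≤ 1)
    (hPt : ∀ s s', 0 ≤ Pt s s') (hPtsum : ∀ s, ∑ s', Pt s s' ≤ 1)
    (hB : 0 < Bstar)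
    (hVnonneg : ∀ s, 0 ≤ Vt s) (hVB : ∀ s, Vt s ≤ Bstar)
    (hbellman : ∀ s, Vt s = ℓt s + ∑ s', Pt s s' * Vt s')
    (hPclose : ∀ s, ∑ s', |Pt s s' - P s s'| ≤ ℓ s / (2 * Bstar))
    (hℓclose : ∀ s, |ℓt s - ℓ s| ≤ ℓ s / 4) :
    ∀ s, ℓ s + ∑ s', P s s' * (4 * Vt s') ≤ 4 * Vt s :=
  four_times_optimistic_value_bellman_general ℓ ℓt P Pt Bstar Vt hB hVnonneg hVB hbellman hPclose
    hℓclose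
end
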